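/- arXiv:1612.04142 — 2 statements merged into one kernel-verified Lean document; each statement's English description precedes it below -/
import Mathlib

section
/- Let β > 1 and s ∈ ℝ \ {0}. Define f(x) = (1 + |s|·e^x)^{−β} · exp(i·s·e^x) for x ∈ ℝ. Then ∫_ℝ |f′(x)| dx ≤ C where C depends only on β (not on s); in fact ∫_ℝ |f′(x)| dx ≤ β·∫₀^∞ (1+u)^{−(β+1)} du + ∫₀^∞ (1+u)^{−β} du, which is finite. -/
/-!
With `a = |s|` and `c = s / |s|` we have `f = h ∘ (x ↦ a eˣ)` for the damped wave
`h u = (1 + u)^(-β) e^(icu)`. Total variation is invariant under the increasing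
reparametrization `u = a eˣ` of `ℝ` onto `(0, ∞)`, so `∫ |f'| = ∫₀^∞ |h'|`, and
`|h' u| ≤ β (1 + u)^(-β-1) + (1 + u)^(-β)` because `|c| = 1`.
-/

open Real Complex MeasureTheory

section Reparametrization

variable {E : Type*} [NormedAddCommGroup E] [NormedSpace ℝ E]

lemma image_univ_const_mul_exp {a : ℝ} (ha : 0 < a) :
    (fun x => a * Real.exp x) '' Set.univ = Set.Ioi 0 := by
  ext u
  simp only [Set.image_univ, Set.mem_range, Set.mem_Ioi]
  refine ⟨by rintro ⟨x, rfl⟩; positivity, fun hu => ⟨Real.log (u / a), ?_⟩⟩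
  rw [Real.exp_log (by positivity)]
  field_simp

lemma integral_norm_deriv_comp_const_mul_exp {h : ℝ → E} {a : ℝ} (ha : 0 < a)
    (hh : ∀ u, 0 < u → DifferentiableAt ℝ h u) :
    ∫ x, ‖deriv (fun x => h (a * Real.exp x)) x‖ = ∫ u in Set.Ioi 0, ‖deriv h u‖ := by
  have hφ : ∀ x ∈ Set.univ, HasDerivWithinAt (fun x => a * Real.exp x) (a * Real.exp x) Set.univ x :=
    fun x _ => ((Real.hasDerivAt_exp x).const_mul a).hasDerivWithinAt
  have hinj : Set.InjOn (fun x => a * Real.exp x) Set.univ := fun x _ y _ hxy =>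
    Real.exp_injective (mul_left_cancel₀ ha.ne' hxy)
  rw [← image_univ_const_mul_exp ha,
    integral_image_eq_integral_abs_deriv_smul MeasurableSet.univ hφ hinj, setIntegral_univ]
  congr 1
  funext x
  have hpos : 0 < a * Real.exp x := by positivity
  have hchain := (hh _ hpos).hasDerivAt.scomp x ((Real.hasDerivAt_exp x).const_mul a)
  rw [Function.comp_def] at hchain
  rw [hchain.deriv, norm_smul, Real.norm_of_nonneg hpos.le, abs_of_pos hpos, smul_eq_mul]

end Reparametrization

noncomputable def dampedWave (β c u : ℝ) : ℂ :=
  ((1 + u : ℝ) : ℂ) ^ (-(β : ℂ)) * Complex.exp (Complex.I * c * u)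

lemma hasDerivAt_dampedWave (β c : ℝ) {u : ℝ} (hu : -1 < u) :
    HasDerivAt (dampedWave β c)
      (-(β : ℂ) * ((1 + u : ℝ) : ℂ) ^ (-(β : ℂ) - 1) * Complex.exp (Complex.I * c * u)
        + ((1 + u : ℝ) : ℂ) ^ (-(β : ℂ)) * (Complex.exp (Complex.I * c * u) * (Complex.I * c))) u := by
  have hpos : 0 < 1 + u := by linarith
  have hpow : HasDerivAt (fun u : ℝ => ((1 + u : ℝ) : ℂ) ^ (-(β : ℂ)))
      (-(β : ℂ) * ((1 + u : ℝ) : ℂ) ^ (-(β : ℂ) - 1)) u := by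
    have := (Complex.hasStrictDerivAt_cpow_const (c := -(β : ℂ))
      (Or.inl (by simpa using hpos))).hasDerivAt.comp_ofReal.comp_const_add 1 u
    simpa using this
  have hexp : HasDerivAt (fun u : ℝ => Complex.exp (Complex.I * c * u))
      (Complex.exp (Complex.I * c * u) * (Complex.I * c)) u := by
    simpa using ((hasDerivAt_id u).ofReal_comp.const_mul (Complex.I * c)).cexp
  exact hpow.mul hexp

lemma norm_deriv_dampedWave_le {β : ℝ} (hβ : 0 ≤ β) (c : ℝ) {u : ℝ} (hu : -1 < u) :
    ‖deriv (dampedWave β c) u‖ ≤ β * (1 + u) ^ (-(β + 1)) + |c| * (1 + u) ^ (-β) := by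
  have hpos : 0 < 1 + u := by linarith
  have hunit : ‖Complex.exp (Complex.I * c * u)‖ = 1 := by
    rw [Complex.norm_exp]; simp
  rw [(hasDerivAt_dampedWave β c hu).deriv]
  refine (norm_add_le _ _).trans (le_of_eq ?_)
  simp only [norm_mul, norm_neg, hunit, Complex.norm_cpow_eq_rpow_re_of_pos hpos, Complex.norm_real,
    Complex.norm_I]
  simp [abs_of_nonneg hβ]
  ring_nf

lemma integrableOn_Ioi_one_add_rpow {p : ℝ} (hp : p < -1) :
    IntegrableOn (fun u : ℝ => (1 + u) ^ p) (Set.Ioi 0) := by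
  simpa [add_comm] using integrableOn_add_rpow_Ioi_of_lt hp (by norm_num : -(1 : ℝ) < 0)

theorem stmt_2 (β : ℝ) (hβ : 1 < β) (s : ℝ) (hs : s ≠ 0)
    (f : ℝ → ℂ)
    (hf : f = fun x : ℝ =>
      ((1 + |s| * Real.exp x : ℝ) : ℂ) ^ (-(β : ℂ)) * Complex.exp (Complex.I * s * Real.exp x)) :
    ∫ x : ℝ, ‖deriv f x‖ ≤
      β * (∫ u in Set.Ioi (0:ℝ), (1 + u) ^ (-(β + 1)))
        + ∫ u in Set.Ioi (0:ℝ), (1 + u) ^ (-β) := by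
  have ha : 0 < |s| := abs_pos.mpr hs
  have hf' : f = fun x => dampedWave β (s / |s|) (|s| * Real.exp x) := by
    rw [hf]
    funext x
    simp only [dampedWave]
    congr 2
    have : ((|s| : ℝ) : ℂ) ≠ 0 := by exact_mod_cast ha.ne'
    push_cast; field_simp
  have hunit : |(s / |s|)| = 1 := by rw [abs_div, abs_abs, div_self ha.ne']
  have hint₁ := integrableOn_Ioi_one_add_rpow (p := -(β + 1)) (by linarith)
  have hint₂ := integrableOn_Ioi_one_add_rpow (p := -β) (by linarith)
  calc ∫ x, ‖deriv f x‖ = ∫ u in Set.Ioi 0, ‖deriv (dampedWave β (s / |s|)) u‖ := by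
        rw [hf']
        exact integral_norm_deriv_comp_const_mul_exp ha fun u hu =>
          (hasDerivAt_dampedWave β _ (by linarith)).differentiableAt
    _ ≤ ∫ u in Set.Ioi 0, (β * (1 + u) ^ (-(β + 1)) + (1 + u) ^ (-β)) := by
        refine integral_mono_of_nonneg (.of_forall fun u => norm_nonneg _)
          ((hint₁.const_mul β).add hint₂) ?_
        filter_upwards [ae_restrict_mem measurableSet_Ioi] with u hu
        simpa [hunit] using norm_deriv_dampedWave_le (by linarith) (s / |s|)
          (by linarith [Set.mem_Ioi.mp hu] : -1 < u)
    _ = _ := by rw [integral_add (hint₁.const_mul β) hint₂, integral_const_mul]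
end

section
/- For θ ∈ (−π/2, π/2) and t > 0, the sequence a_n = exp(−t·e^{iθ}·2^{−n}) (n ≥ 1) satisfies ‖a‖_{BV} := sup_n |a_n| + Σ_{n=1}^∞ |a_n − a_{n+1}| ≤ C·(π/2 − |θ|)^{−1} for an absolute constant C. -/
/-!
Put `w = t e^{iθ}`, so `Re w = t cos θ` and `‖w‖ = t`. Every sample `exp (-w x)` with `x ≥ 0` has
modulus at most `1`. Consecutive samples `exp (-2wx)` and `exp (-wx)` lie in the half plane
`Re ≤ -x Re w`, where `exp` is `e^{-x Re w}`-Lipschitz, so their distance is at most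
`‖w‖ x e^{-x Re w} ≤ (2‖w‖ / Re w) (e^{-x Re w / 2} - e^{-x Re w})`. This telescopes over the
dyadic scales to at most `2‖w‖ / Re w = 2 / cos θ`, and Jordan's inequality
`cos θ ≥ (2/π) (π/2 - |θ|)` turns this into the bound.
-/

open Real Complex

theorem Complex.norm_exp_sub_exp_le {a b : ℂ} {m : ℝ} (ha : a.re ≤ m) (hb : b.re ≤ m) :
    ‖exp a - exp b‖ ≤ Real.exp m * ‖a - b‖ := by
  have hderiv : ∀ z ∈ {z : ℂ | z.re ≤ m}, ‖fderiv ℂ exp z‖ ≤ Real.exp m := fun z hz => by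
    rw [(hasDerivAt_exp z).hasFDerivAt.fderiv, ContinuousLinearMap.norm_toSpanSingleton,
      norm_exp]
    exact Real.exp_le_exp.2 hz
  simpa using (convex_halfSpace_re_le m).norm_image_sub_le_of_norm_fderiv_le
    (fun z _ => differentiable_exp.differentiableAt) hderiv hb ha

theorem Real.mul_exp_neg_le_two_mul_sub (u : ℝ) :
    u * Real.exp (-u) ≤ 2 * (Real.exp (-(u / 2)) - Real.exp (-u)) := by
  have hsplit : Real.exp (-(u / 2)) = Real.exp (-u) * Real.exp (u / 2) := by
    rw [← Real.exp_add]; ring_nf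
  have := Real.add_one_le_exp (u / 2)
  rw [hsplit]
  nlinarith [Real.exp_pos (-u)]

theorem two_div_pi_mul_le_cos {θ : ℝ} (hθ : |θ| ≤ π / 2) :
    2 / π * (π / 2 - |θ|) ≤ Real.cos θ := by
  have h := Real.one_sub_mul_le_cos (abs_nonneg θ) hθ
  rw [Real.cos_abs] at h
  have : 2 / π * (π / 2 - |θ|) = 1 - 2 / π * |θ| := by field_simp
  linarith

theorem one_add_two_div_cos_le {θ : ℝ} (hθ : |θ| < π / 2) :
    1 + 2 / Real.cos θ ≤ 3 * π / 2 * (π / 2 - |θ|)⁻¹ := by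
  have hcos : 0 < Real.cos θ := Real.cos_pos_of_mem_Ioo (abs_lt.1 hθ)
  have hd : 0 < π / 2 - |θ| := by linarith
  have hone : 1 ≤ π / 2 / (π / 2 - |θ|) := by
    rw [le_div_iff₀ hd]; linarith [abs_nonneg θ]
  have hcos_inv : 2 / Real.cos θ ≤ π / (π / 2 - |θ|) := by
    rw [div_le_div_iff₀ hcos hd]
    calc 2 * (π / 2 - |θ|) = π * (2 / π * (π / 2 - |θ|)) := by field_simp
      _ ≤ π * Real.cos θ := by gcongr; exact two_div_pi_mul_le_cos hθ.le
  calc _ ≤ π / 2 / (π / 2 - |θ|) + π / (π / 2 - |θ|) := by linarith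
    _ = _ := by ring

lemma re_neg_mul_ofReal (w : ℂ) (x : ℝ) : (-w * x).re = -(w.re * x) := by simp

section DyadicSamples

variable {w : ℂ}

lemma norm_exp_neg_mul_two_mul_sub_le (hw : 0 < w.re) {x : ℝ} (hx : 0 ≤ x) :
    ‖exp (-w * ↑(2 * x)) - exp (-w * x)‖ ≤
      2 * ‖w‖ / w.re * (Real.exp (-(w.re * x / 2)) - Real.exp (-(w.re * x))) := by
  have hre₁ : (-w * ↑(2 * x)).re ≤ -(w.re * x) := by
    rw [re_neg_mul_ofReal]; nlinarith
  have hre₂ : (-w * x).re ≤ -(w.re * x) := (re_neg_mul_ofReal w x).le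
  have hdiff : ‖-w * ↑(2 * x) - -w * x‖ = ‖w‖ * x := by
    rw [show -w * ↑(2 * x) - -w * x = -w * x by push_cast; ring, norm_mul, norm_neg,
      norm_real, Real.norm_of_nonneg hx]
  calc _ ≤ Real.exp (-(w.re * x)) * (‖w‖ * x) := hdiff ▸ norm_exp_sub_exp_le hre₁ hre₂
    _ = ‖w‖ / w.re * ((w.re * x) * Real.exp (-(w.re * x))) := by field_simp
    _ ≤ ‖w‖ / w.re * (2 * (Real.exp (-(w.re * x / 2)) - Real.exp (-(w.re * x)))) := by
      exact mul_le_mul_of_nonneg_left (Real.mul_exp_neg_le_two_mul_sub _) (by positivity)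
    _ = _ := by ring

lemma iSup_norm_exp_neg_mul_two_zpow_le_one (hw : 0 ≤ w.re) :
    ⨆ n : ℕ, ‖exp (-w * (2 : ℂ) ^ (-((n : ℤ) + 1)))‖ ≤ 1 :=
  ciSup_le fun n => by
    rw [show (2 : ℂ) ^ (-((n : ℤ) + 1)) = ((2 : ℝ) ^ (-((n : ℤ) + 1)) : ℝ) by push_cast; rfl,
      norm_exp, re_neg_mul_ofReal, Real.exp_le_one_iff, neg_nonpos]
    positivity

lemma tsum_norm_exp_neg_mul_two_zpow_sub_le (hw : 0 < w.re) :
    ∑' n : ℕ, ‖exp (-w * (2 : ℂ) ^ (-((n : ℤ) + 1))) - exp (-w * (2 : ℂ) ^ (-((n : ℤ) + 2)))‖ ≤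
      2 * ‖w‖ / w.re := by
  set x : ℕ → ℝ := fun n => (2 : ℝ) ^ (-((n : ℤ) + 2))
  set B : ℕ → ℝ := fun n => Real.exp (-(w.re * x n))
  have hterm : ∀ n : ℕ, ‖exp (-w * (2 : ℂ) ^ (-((n : ℤ) + 1))) -
      exp (-w * (2 : ℂ) ^ (-((n : ℤ) + 2)))‖ ≤ 2 * ‖w‖ / w.re * (B (n + 1) - B n) := by
    intro n
    have hx₁ : (2 : ℂ) ^ (-((n : ℤ) + 1)) = ((2 * x n : ℝ) : ℂ) := by
      simp only [x]
      push_cast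
      rw [show -((n : ℤ) + 1) = 1 + -((n : ℤ) + 2) by ring, zpow_add₀ two_ne_zero, zpow_one]
    have hx₂ : (2 : ℂ) ^ (-((n : ℤ) + 2)) = ((x n : ℝ) : ℂ) := by
      simp only [x]; push_cast; rfl
    have hhalf : w.re * x n / 2 = w.re * x (n + 1) := by
      simp only [x]
      rw [show -(((n + 1 : ℕ) : ℤ) + 2) = -((n : ℤ) + 2) + -1 by push_cast; ring,
        zpow_add₀ two_ne_zero, zpow_neg_one]
      ring
    rw [hx₁, hx₂]
    simpa only [B, hhalf] using norm_exp_neg_mul_two_mul_sub_le hw (by positivity : 0 ≤ x n)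
  refine Real.tsum_le_of_sum_range_le (fun _ => norm_nonneg _) fun N => ?_
  calc _ ≤ ∑ n ∈ Finset.range N, 2 * ‖w‖ / w.re * (B (n + 1) - B n) :=
        Finset.sum_le_sum fun n _ => hterm n
    _ = 2 * ‖w‖ / w.re * (B N - B 0) := by rw [← Finset.mul_sum, Finset.sum_range_sub]
    _ ≤ 2 * ‖w‖ / w.re * 1 := by
      have hBN : B N ≤ 1 := Real.exp_le_one_iff.2 (neg_nonpos.2 (by positivity))
      have hB0 : 0 < B 0 := Real.exp_pos _
      gcongr; linarith
    _ = _ := mul_one _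

end DyadicSamples

theorem stmt_11 :
    ∃ C : ℝ, 0 < C ∧ ∀ θ ∈ Set.Ioo (-(π/2)) (π/2), ∀ t : ℝ, 0 < t →
      (⨆ n : ℕ, norm
          (Complex.exp (-((t : ℂ) * Complex.exp (θ * Complex.I)) * (2:ℂ) ^ (-((n : ℤ) + 1)))))
        + ∑' n : ℕ,
            norm
              (Complex.exp (-((t : ℂ) * Complex.exp (θ * Complex.I)) * (2:ℂ) ^ (-((n : ℤ) + 1)))
                - Complex.exp (-((t : ℂ) * Complex.exp (θ * Complex.I)) * (2:ℂ) ^ (-((n : ℤ) + 2))))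
        ≤ C * (π/2 - |θ|)⁻¹ := by
  refine ⟨3 * π / 2, by positivity, fun θ hθ t ht => ?_⟩
  have hcos : 0 < Real.cos θ := Real.cos_pos_of_mem_Ioo hθ
  set w : ℂ := t * exp (θ * I)
  have hw_re : w.re = t * Real.cos θ := by simp [w, exp_ofReal_mul_I_re]
  have hw_norm : ‖w‖ = t := by simp [w, norm_exp_ofReal_mul_I, ht.le]
  have hw : 0 < w.re := hw_re ▸ mul_pos ht hcos
  calc _ ≤ 1 + 2 * ‖w‖ / w.re := add_le_add (iSup_norm_exp_neg_mul_two_zpow_le_one hw.le)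
          (tsum_norm_exp_neg_mul_two_zpow_sub_le hw)
    _ = 1 + 2 / Real.cos θ := by rw [hw_re, hw_norm]; field_simp
    _ ≤ _ := one_add_two_div_cos_le (abs_lt.2 hθ)
end
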